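/- There is no restriction from GHZ₂(3) ⊗ EPR₂(BC-wedge) to W(3) ⊗ EPR₂(BC-wedge): there do not exist linear maps M_A, M_B, M_C with (M_A⊗M_B⊗M_C)(φ) = ψ, where φ = (|000⟩+|111⟩)_{A₁B₁C₁} ⊗ (|00⟩+|11⟩)_{A₂C₂} ⊗ (|00⟩+|11⟩)_{B₂C₃} and ψ = (|100⟩+|010⟩+|001⟩)_{A₁B₁C₁} ⊗ (|00⟩+|11⟩)_{A₂C₂} ⊗ (|00⟩+|11⟩)_{B₂C₃}, with party A = A₁A₂ ≅ ℂ²⊗ℂ², party B = B₁B₂ ≅ ℂ²⊗ℂ², party C = C₁C₂C₃ ≅ ℂ²⊗ℂ²⊗ℂ². -/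

import Mathlib

open TensorProduct

noncomputable def ket (a : Fin 2) : Fin 2 → ℂ := Pi.single a 1

/-- Party Hilbert spaces: `A = A₁A₂ ≅ ℂ²⊗ℂ²`, `B = B₁B₂ ≅ ℂ²⊗ℂ²`,
`C = C₁C₂C₃ ≅ ℂ²⊗ℂ²⊗ℂ²`. -/
noncomputable abbrev HA := (Fin 2 → ℂ) ⊗[ℂ] (Fin 2 → ℂ)
noncomputable abbrev HB := (Fin 2 → ℂ) ⊗[ℂ] (Fin 2 → ℂ)
noncomputable abbrev HC := (Fin 2 → ℂ) ⊗[ℂ] ((Fin 2 → ℂ) ⊗[ℂ] (Fin 2 → ℂ))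

/-- `φ = GHZ₂(3)_{A₁B₁C₁} ⊗ EPR₂_{A₂C₂} ⊗ EPR₂_{B₂C₃}`, grouped by parties. -/
noncomputable def phiGHZ : HA ⊗[ℂ] (HB ⊗[ℂ] HC) :=
  ∑ g : Fin 2, ∑ p : Fin 2, ∑ q : Fin 2,
    (ket g ⊗ₜ[ℂ] ket p) ⊗ₜ[ℂ]
      ((ket g ⊗ₜ[ℂ] ket q) ⊗ₜ[ℂ] (ket g ⊗ₜ[ℂ] (ket p ⊗ₜ[ℂ] ket q)))

/-- `ψ = W(3)_{A₁B₁C₁} ⊗ EPR₂_{A₂C₂} ⊗ EPR₂_{B₂C₃}`, grouped by parties. -/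
noncomputable def psiW : HA ⊗[ℂ] (HB ⊗[ℂ] HC) :=
  ∑ p : Fin 2, ∑ q : Fin 2,
    ((ket 1 ⊗ₜ[ℂ] ket p) ⊗ₜ[ℂ]
        ((ket 0 ⊗ₜ[ℂ] ket q) ⊗ₜ[ℂ] (ket 0 ⊗ₜ[ℂ] (ket p ⊗ₜ[ℂ] ket q))) +
      (ket 0 ⊗ₜ[ℂ] ket p) ⊗ₜ[ℂ]
        ((ket 1 ⊗ₜ[ℂ] ket q) ⊗ₜ[ℂ] (ket 0 ⊗ₜ[ℂ] (ket p ⊗ₜ[ℂ] ket q))) +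
      (ket 0 ⊗ₜ[ℂ] ket p) ⊗ₜ[ℂ]
        ((ket 0 ⊗ₜ[ℂ] ket q) ⊗ₜ[ℂ] (ket 1 ⊗ₜ[ℂ] (ket p ⊗ₜ[ℂ] ket q))))

/-!
Contracting the first party of a three-party tensor with a covector `y` gives a matrix between
the other two parties, and a restriction `(A, B, C)` sends the slice of `φ` at `y A` to the
slice of `ψ` at `y`, multiplied by `B` and `Cᵀ`; so it cannot raise ranks. A slice of `φ` at a
covector supported on one GHZ branch has rank at most 2, while a slice of `ψ` has rank 4
unless `y` vanishes on the branch `A₁ = 0`. Since `ψ` is concise, `A` is invertible, so the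
preimages of the standard basis covectors span everything, yet they all vanish at `(0, 0)`.
-/

open Matrix
open scoped Kronecker

section TensorSlice

variable {R : Type*} [CommRing R] {ι₁ ι₂ ι₃ : Type*} [Fintype ι₁]

def tensorSlice (T : ι₁ × ι₂ × ι₃ → R) (y : ι₁ → R) : Matrix ι₂ ι₃ R :=
  Matrix.of fun b c ↦ ∑ a, y a * T (a, b, c)

@[simp]
theorem tensorSlice_zero (T : ι₁ × ι₂ × ι₃ → R) : tensorSlice T 0 = 0 := by
  ext; simp [tensorSlice]

theorem tensorSlice_kronecker_mulVec {κ₁ κ₂ κ₃ : Type*} [Fintype ι₂] [Fintype ι₃] [Fintype κ₁]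
    (A : Matrix κ₁ ι₁ R) (B : Matrix κ₂ ι₂ R) (C : Matrix κ₃ ι₃ R) (T : ι₁ × ι₂ × ι₃ → R)
    (y : κ₁ → R) :
    tensorSlice ((A ⊗ₖ (B ⊗ₖ C)) *ᵥ T) y = B * tensorSlice T (y ᵥ* A) * Cᵀ := by
  ext b c
  simp only [tensorSlice, mulVec, dotProduct, vecMul, mul_apply, of_apply, transpose_apply,
    kroneckerMap_apply, Fintype.sum_prod_type, Finset.mul_sum, Finset.sum_mul]
  simp only [Finset.sum_comm (γ := κ₁), Finset.sum_comm (γ := ι₁) (α := ι₂),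
    Finset.sum_comm (γ := ι₁) (α := ι₃), Finset.sum_comm (γ := ι₂) (α := ι₃)]
  refine Fintype.sum_congr _ _ fun _ ↦ Fintype.sum_congr _ _ fun _ ↦ Fintype.sum_congr _ _ fun _ ↦
    Fintype.sum_congr _ _ fun _ ↦ by ring

end TensorSlice

theorem TensorProduct.repr_map_map {R M₁ M₂ M₃ N₁ N₂ N₃ ι₁ ι₂ ι₃ κ₁ κ₂ κ₃ : Type*} [CommRing R]
    [AddCommGroup M₁] [AddCommGroup M₂] [AddCommGroup M₃] [AddCommGroup N₁] [AddCommGroup N₂]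
    [AddCommGroup N₃] [Module R M₁] [Module R M₂] [Module R M₃] [Module R N₁] [Module R N₂]
    [Module R N₃] [Fintype ι₁] [Fintype ι₂] [Fintype ι₃] [Finite κ₁] [Finite κ₂] [Finite κ₃]
    [DecidableEq ι₁] [DecidableEq ι₂] [DecidableEq ι₃]
    (b₁ : Module.Basis ι₁ R M₁) (b₂ : Module.Basis ι₂ R M₂) (b₃ : Module.Basis ι₃ R M₃)
    (c₁ : Module.Basis κ₁ R N₁) (c₂ : Module.Basis κ₂ R N₂) (c₃ : Module.Basis κ₃ R N₃)
    (f₁ : M₁ →ₗ[R] N₁) (f₂ : M₂ →ₗ[R] N₂) (f₃ : M₃ →ₗ[R] N₃) (t : M₁ ⊗[R] (M₂ ⊗[R] M₃)) :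
    ⇑((c₁.tensorProduct (c₂.tensorProduct c₃)).repr (map f₁ (map f₂ f₃) t)) =
      (LinearMap.toMatrix b₁ c₁ f₁ ⊗ₖ
          (LinearMap.toMatrix b₂ c₂ f₂ ⊗ₖ LinearMap.toMatrix b₃ c₃ f₃)) *ᵥ
        (b₁.tensorProduct (b₂.tensorProduct b₃)).repr t := by
  rw [← TensorProduct.toMatrix_map, ← TensorProduct.toMatrix_map, LinearMap.toMatrix_mulVec_repr]

theorem Submodule.eq_top_of_injective_of_basis_mem_map {K V W ι : Type*} [Field K]
    [AddCommGroup V] [Module K V] [AddCommGroup W] [Module K W] {L : V →ₗ[K] W}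
    (hL : Function.Injective L) (p : Submodule K V) (b : Module.Basis ι K W)
    (hb : ∀ i, b i ∈ p.map L) : p = ⊤ := by
  have hmap : p.map L = ⊤ := by
    rw [eq_top_iff, ← b.span_eq, Submodule.span_le]
    rintro _ ⟨i, rfl⟩
    exact hb i
  refine eq_top_iff.2 fun v _ ↦ ?_
  obtain ⟨v', hv', hLv'⟩ := hmap.ge (Submodule.mem_top (x := L v))
  exact hL hLv' ▸ hv'

def ghzCoeff (i j k : Fin 2) : ℂ := if i = j ∧ j = k then 1 else 0

def wCoeff (i j k : Fin 2) : ℂ := if (i : ℕ) + j + k = 1 then 1 else 0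

/-- Coordinates of `t_{A₁B₁C₁} ⊗ EPR₂_{A₂C₂} ⊗ EPR₂_{B₂C₃}`, indexed by
`((a₁, a₂), (b₁, b₂), (c₁, c₂, c₃))`. -/
def withEPRPairs (t : Fin 2 → Fin 2 → Fin 2 → ℂ) :
    (Fin 2 × Fin 2) × (Fin 2 × Fin 2) × (Fin 2 × Fin 2 × Fin 2) → ℂ :=
  fun i ↦ if i.1.2 = i.2.2.2.1 ∧ i.2.1.2 = i.2.2.2.2 then t i.1.1 i.2.1.1 i.2.2.1 else 0

noncomputable def basisAB : Module.Basis (Fin 2 × Fin 2) ℂ HA :=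
  (Pi.basisFun ℂ (Fin 2)).tensorProduct (Pi.basisFun ℂ (Fin 2))

noncomputable def basisC : Module.Basis (Fin 2 × Fin 2 × Fin 2) ℂ HC :=
  (Pi.basisFun ℂ (Fin 2)).tensorProduct basisAB

theorem ket_tmul_ket (i j : Fin 2) : ket i ⊗ₜ[ℂ] ket j = basisAB (i, j) := by
  simp [ket, basisAB]

theorem ket_tmul_basisAB (i : Fin 2) (j : Fin 2 × Fin 2) :
    ket i ⊗ₜ[ℂ] basisAB j = basisC (i, j) := by
  simp [ket, basisC]

theorem repr_phiGHZ :
    ⇑((basisAB.tensorProduct (basisAB.tensorProduct basisC)).repr phiGHZ) =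
      withEPRPairs ghzCoeff := by
  ext ⟨⟨a₁, a₂⟩, ⟨b₁, b₂⟩, c₁, c₂, c₃⟩
  simp only [phiGHZ, ket_tmul_ket, ket_tmul_basisAB, ← Module.Basis.tensorProduct_apply, map_sum,
    Module.Basis.repr_self, Finsupp.coe_finsetSum, Finset.sum_apply, Finsupp.single_apply,
    Prod.mk.injEq, ite_and, Finset.sum_ite_irrel, Finset.sum_ite_eq', Finset.mem_univ, if_true,
    Finset.sum_const_zero, withEPRPairs, ghzCoeff]
  split_ifs <;> simp_all

theorem repr_psiW :
    ⇑((basisAB.tensorProduct (basisAB.tensorProduct basisC)).repr psiW) =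
      withEPRPairs wCoeff := by
  ext ⟨⟨a₁, a₂⟩, ⟨b₁, b₂⟩, c₁, c₂, c₃⟩
  simp only [psiW, ket_tmul_ket, ket_tmul_basisAB, ← Module.Basis.tensorProduct_apply, map_sum,
    map_add, Module.Basis.repr_self, Finsupp.coe_finsetSum, Finsupp.coe_add, Pi.add_apply,
    Finset.sum_apply, Finsupp.single_apply, Prod.mk.injEq, ite_and, Finset.sum_add_distrib,
    Finset.sum_ite_irrel, Finset.sum_ite_eq', Finset.mem_univ, if_true, Finset.sum_const_zero,
    withEPRPairs, wCoeff]
  fin_cases a₁ <;> fin_cases b₁ <;> fin_cases c₁ <;> simp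

theorem tensorSlice_withEPRPairs (t : Fin 2 → Fin 2 → Fin 2 → ℂ) (y : Fin 2 × Fin 2 → ℂ)
    (b : Fin 2 × Fin 2) (c : Fin 2 × Fin 2 × Fin 2) :
    tensorSlice (withEPRPairs t) y b c =
      if b.2 = c.2.2 then ∑ i, y (i, c.2.1) * t i b.1 c.1 else 0 := by
  split_ifs with hb <;>
    simp [tensorSlice, withEPRPairs, Fintype.sum_prod_type, ite_and, hb, Finset.sum_ite_eq']

theorem rank_tensorSlice_ghz_le (x : Fin 2 × Fin 2 → ℂ) (g : Fin 2)
    (hx : ∀ a : Fin 2 × Fin 2, a.1 ≠ g → x a = 0) :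
    (tensorSlice (withEPRPairs ghzCoeff) x).rank ≤ 2 := by
  refine (rank_le_card_of_support_subset _ (Finset.univ.image (g, ·)) ?_).trans ?_
  · rw [Function.support_subset_iff']
    intro b hb
    have hbg : b.1 ≠ g := fun h ↦ hb (Finset.mem_image.2 ⟨b.2, Finset.mem_univ _, by rw [← h]⟩)
    ext c
    simp [Matrix.row, tensorSlice_withEPRPairs, ghzCoeff, ite_and, hx (b.1, c.2.1) hbg]
  · exact Finset.card_image_le.trans (by simp)

theorem tensorSlice_w_eq_zero {y : Fin 2 × Fin 2 → ℂ}
    (h : tensorSlice (withEPRPairs wCoeff) y = 0) : y = 0 := by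
  ext ⟨i, p⟩
  fin_cases i
  · simpa [tensorSlice_withEPRPairs, wCoeff] using congrFun₂ h (1, 0) (0, p, 0)
  · simpa [tensorSlice_withEPRPairs, wCoeff] using congrFun₂ h (0, 0) (0, p, 0)

theorem rank_tensorSlice_w_le_two {y : Fin 2 × Fin 2 → ℂ}
    (hy : (tensorSlice (withEPRPairs wCoeff) y).rank ≤ 2) (p : Fin 2) : y (0, p) = 0 := by
  by_contra hu
  -- On the columns with `c₂ = p` the slice is `δ_{b₂ c₃}` times
  -- `!![y (1, p), y (0, p); y (0, p), 0]` in `(b₁, c₁)`; `N` inverts it there.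
  let N : Matrix (Fin 2 × Fin 2 × Fin 2) (Fin 2 × Fin 2) ℂ := Matrix.of fun c b ↦
    if c.2.1 = p ∧ c.2.2 = b.2 then
      !![0, (y (0, p))⁻¹; (y (0, p))⁻¹, -((y (0, p))⁻¹ * (y (1, p) * (y (0, p))⁻¹))] c.1 b.1
    else 0
  have hN : tensorSlice (withEPRPairs wCoeff) y * N = 1 := by
    ext ⟨b₁, b₂⟩ ⟨b₁', b₂'⟩
    by_cases hb : b₂ = b₂' <;> fin_cases b₁ <;> fin_cases b₁' <;>
      simp [N, Matrix.mul_apply, tensorSlice_withEPRPairs, Fintype.sum_prod_type, ite_and,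
        Matrix.one_apply, wCoeff, hb, hu]
  have hrank := rank_mul_le_left (tensorSlice (withEPRPairs wCoeff) y) N
  rw [hN, rank_one, Fintype.card_prod, Fintype.card_fin] at hrank
  omega

theorem kronecker_mulVec_ghz_ne_w (A B : Matrix (Fin 2 × Fin 2) (Fin 2 × Fin 2) ℂ)
    (C : Matrix (Fin 2 × Fin 2 × Fin 2) (Fin 2 × Fin 2 × Fin 2) ℂ) :
    (A ⊗ₖ (B ⊗ₖ C)) *ᵥ withEPRPairs ghzCoeff ≠ withEPRPairs wCoeff := by
  intro h
  have hslice (y : Fin 2 × Fin 2 → ℂ) : tensorSlice (withEPRPairs wCoeff) y =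
      B * tensorSlice (withEPRPairs ghzCoeff) (y ᵥ* A) * Cᵀ := by
    rw [← h, tensorSlice_kronecker_mulVec]
  have hinj : Function.Injective A.vecMulLinear := by
    rw [← LinearMap.ker_eq_bot, LinearMap.ker_eq_bot']
    intro y hy
    apply tensorSlice_w_eq_zero
    rw [hslice, show y ᵥ* A = 0 from hy, tensorSlice_zero, Matrix.mul_zero, Matrix.zero_mul]
  have hker : LinearMap.ker (LinearMap.proj (0, 0) : (Fin 2 × Fin 2 → ℂ) →ₗ[ℂ] ℂ) = ⊤ := by
    refine Submodule.eq_top_of_injective_of_basis_mem_map hinj _ (Pi.basisFun ℂ _) fun a ↦ ?_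
    obtain ⟨y, hy⟩ := LinearMap.surjective_of_injective hinj (Pi.basisFun ℂ _ a)
    have hy' : y ᵥ* A = Pi.single a 1 := hy.trans (Pi.basisFun_apply _ _ _)
    refine ⟨y, rank_tensorSlice_w_le_two ?_ 0, hy⟩
    calc (tensorSlice (withEPRPairs wCoeff) y).rank
        = (B * tensorSlice (withEPRPairs ghzCoeff) (Pi.single a 1) * Cᵀ).rank := by
          rw [hslice, hy']
      _ ≤ (tensorSlice (withEPRPairs ghzCoeff) (Pi.single a 1)).rank :=
          (rank_mul_le_left _ _).trans (rank_mul_le_right _ _)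
      _ ≤ 2 := rank_tensorSlice_ghz_le _ a.1 fun a' ha' ↦
          Pi.single_eq_of_ne (ne_of_apply_ne Prod.fst ha') _
  simpa using hker.ge (Submodule.mem_top (x := Pi.single ((0 : Fin 2), (0 : Fin 2)) (1 : ℂ)))

/-- There is no restriction from `GHZ₂(3) ⊗ EPR₂ ⊗ EPR₂` to `W(3) ⊗ EPR₂ ⊗ EPR₂`
with the indicated grouping into parties `A`, `B`, `C`. -/
theorem no_restriction_GHZ_EPR_to_W_EPR :
    ¬ ∃ (MA : HA →ₗ[ℂ] HA) (MB : HB →ₗ[ℂ] HB) (MC : HC →ₗ[ℂ] HC),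
        TensorProduct.map MA (TensorProduct.map MB MC) phiGHZ = psiW := by
  rintro ⟨MA, MB, MC, h⟩
  apply kronecker_mulVec_ghz_ne_w (LinearMap.toMatrix basisAB basisAB MA)
    (LinearMap.toMatrix basisAB basisAB MB) (LinearMap.toMatrix basisC basisC MC)
  rw [← repr_phiGHZ, ← repr_psiW, ← h, TensorProduct.repr_map_map basisAB basisAB basisC]
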